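/- arXiv:1708.02606 — 5 statements merged into one kernel-verified Lean document; each statement's English description precedes it below -/
import Mathlib

section
/- Let X be a locally path connected topological space and x₀ ∈ X. Then X is a small loop transfer space at x₀ if and only if for every open neighborhood U of x₀ there exists a path open cover 𝒱 = {V_α : α ∈ P(X,x₀)} of X at x₀ such that the path Spanier group π̃(𝒱, x₀) is contained in i_*π₁(U, x₀), where i_* : π₁(U,x₀) → π₁(X,x₀) is induced by the inclusion U → X. -/
open TopologicalSpace

attribute [local instance] Path.Homotopic.setoid

/-- The homotopy class of a loop, as an element of the fundamental group. -/
noncomputable def loopClass {X : Type*} [TopologicalSpace X] {x : X} (γ : Path x x) :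
    FundamentalGroup X x :=
  FundamentalGroup.fromPath (X := TopCat.of X) ⟦γ⟧

/-- `α` is a small loop transfer (SLT) path: for every open neighborhood `U` of `α 0`
there is an open neighborhood `V` of `α 1` such that every loop at `α 1` inside `V` is
path-homotopic to some loop at `α 0` inside `U` conjugated along `α`. -/
def IsSLTPath {X : Type*} [TopologicalSpace X] {x₀ x₁ : X} (α : Path x₀ x₁) : Prop :=
  ∀ U : Set X, IsOpen U → x₀ ∈ U →
    ∃ V : Set X, IsOpen V ∧ x₁ ∈ V ∧
      ∀ γ : Path x₁ x₁, (∀ t, γ t ∈ V) →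
        ∃ γ' : Path x₀ x₀, (∀ t, γ' t ∈ U) ∧
          γ'.Homotopic ((α.trans γ).trans α.symm)

/-- `X` is a small loop transfer space at `x₀`: every path starting at `x₀` is an SLT path. -/
def IsSLTAt (X : Type*) [TopologicalSpace X] (x₀ : X) : Prop :=
  ∀ (x₁ : X) (α : Path x₀ x₁), IsSLTPath α

/-- `X` is SLTL at `x₀`: every loop based at `x₀` is an SLT path. -/
def IsSLTLAt (X : Type*) [TopologicalSpace X] (x₀ : X) : Prop :=
  ∀ γ : Path x₀ x₀, IsSLTPath γ

/-- `X` is SLTP at `x₀`: every non-loop path starting at `x₀` is an SLT path. -/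
def IsSLTPAt (X : Type*) [TopologicalSpace X] (x₀ : X) : Prop :=
  ∀ (x₁ : X) (α : Path x₀ x₁), x₁ ≠ x₀ → IsSLTPath α

/-- The set of homotopy classes of loops based at `x₀` with image contained in `U`;
this is the image `i₊π₁(U, x₀)` of the homomorphism induced by the inclusion `U → X`. -/
noncomputable def loopClassesIn {X : Type*} [TopologicalSpace X] (x₀ : X) (U : Set X) :
    Set (FundamentalGroup X x₀) :=
  { g | ∃ γ : Path x₀ x₀, (∀ t, γ t ∈ U) ∧ g = loopClass γ }

/-- The quotient topology on the fundamental group, coinduced by the map from the loop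
space (with the compact-open topology) sending a loop to its homotopy class. -/
noncomputable def qtop (X : Type*) [TopologicalSpace X] (x₀ : X) :
    TopologicalSpace (FundamentalGroup X x₀) :=
  coinduced (fun γ : Path x₀ x₀ => loopClass γ) inferInstance

/-- The whisker topology on the fundamental group, generated by the basis of cosets
`[α] · i₊π₁(U, x₀)` for `U` an open neighborhood of `x₀`. -/
noncomputable def whTop (X : Type*) [TopologicalSpace X] (x₀ : X) :
    TopologicalSpace (FundamentalGroup X x₀) :=
  generateFrom { S | ∃ (g : FundamentalGroup X x₀) (U : Set X), IsOpen U ∧ x₀ ∈ U ∧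
      S = (fun h => g * h) '' loopClassesIn x₀ U }

/-- A loop based at `x` is small if every open neighborhood of `x` contains a
representative of its homotopy class. -/
def IsSmallLoop {X : Type*} [TopologicalSpace X] {x : X} (γ : Path x x) : Prop :=
  ∀ U : Set X, IsOpen U → x ∈ U →
    ∃ δ : Path x x, (∀ t, δ t ∈ U) ∧ δ.Homotopic γ

/-- `π₁ˢ(X, x)`: the set of homotopy classes of small loops based at `x`. -/
noncomputable def pi1s {X : Type*} [TopologicalSpace X] (x : X) :
    Set (FundamentalGroup X x) :=
  { g | ∃ γ : Path x x, IsSmallLoop γ ∧ g = loopClass γ }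

/-- `π₁ˢᵍ(X, x₀)`: the subgroup generated by classes `[α * β * α⁻¹]` where `α` is a path
starting at `x₀` and `β` is a small loop based at `α 1`. -/
noncomputable def pi1sg {X : Type*} [TopologicalSpace X] (x₀ : X) :
    Subgroup (FundamentalGroup X x₀) :=
  Subgroup.closure { g | ∃ (x₁ : X) (α : Path x₀ x₁) (β : Path x₁ x₁), IsSmallLoop β ∧
      g = loopClass ((α.trans β).trans α.symm) }

/-- The path Spanier group of a path open cover `V` at `x₀`: the subgroup generated by the
classes `[α * β * α⁻¹]` where `α` is a path starting at `x₀` and `β` is a loop based at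
`α 1` with image inside `V α`. -/
noncomputable def pathSpanierGroup {X : Type*} [TopologicalSpace X] (x₀ : X)
    (V : ∀ x₁ : X, Path x₀ x₁ → Set X) : Subgroup (FundamentalGroup X x₀) :=
  Subgroup.closure { g | ∃ (x₁ : X) (α : Path x₀ x₁) (β : Path x₁ x₁),
      (∀ t, β t ∈ V x₁ α) ∧ g = loopClass ((α.trans β).trans α.symm) }

/-- `X` is small "small loop" transfer (SSLT) at `x₀`. -/
def IsSSLTAt (X : Type*) [TopologicalSpace X] (x₀ : X) : Prop :=
  ∀ (x₁ : X) (α : Path x₀ x₁) (U : Set X), IsOpen U → x₀ ∈ U →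
    ∃ V : Set X, IsOpen V ∧ x₁ ∈ V ∧
      ∀ β : Path x₁ x₁, IsSmallLoop β → (∀ t, β t ∈ V) →
        ∃ γ : Path x₀ x₀, (∀ t, γ t ∈ U) ∧
          γ.Homotopic ((α.trans β).trans α.symm)

/-- `X` is semilocally small generated: every point has an open neighborhood `U` with
`i₊π₁(U, x) ≤ π₁ˢᵍ(X, x)`. -/
noncomputable def SemilocallySmallGenerated (X : Type*) [TopologicalSpace X] : Prop :=
  ∀ x : X, ∃ U : Set X, IsOpen U ∧ x ∈ U ∧ loopClassesIn x U ⊆ (pi1sg x : Set (FundamentalGroup X x))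

/-! The path Spanier group is generated by the classes `[α * β * α⁻¹]` and `i₊π₁(U, x₀)` is
a subgroup, so the inclusion only needs checking on generators, where it is exactly the SLT
condition at `α` with `V α` as the transferring neighborhood. The cover is obtained by
choosing such a `V α` for every `α`. -/

section LoopClass

variable {X : Type*} [TopologicalSpace X] {x : X}

theorem loopClass_eq_loopClass_iff {γ δ : Path x x} :
    loopClass γ = loopClass δ ↔ γ.Homotopic δ :=
  Quotient.eq

theorem loopClass_trans (γ δ : Path x x) : loopClass (γ.trans δ) = loopClass δ * loopClass γ :=
  rfl

theorem loopClass_symm (γ : Path x x) : loopClass γ.symm = (loopClass γ)⁻¹ :=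
  rfl

theorem loopClass_refl : loopClass (Path.refl x) = 1 :=
  rfl

noncomputable def loopClassesSubgroup (x₀ : X) (U : Set X) (hx : x₀ ∈ U) :
    Subgroup (FundamentalGroup X x₀) where
  carrier := loopClassesIn x₀ U
  one_mem' := ⟨Path.refl x₀, fun _ => hx, loopClass_refl.symm⟩
  mul_mem' := by
    rintro _ _ ⟨γ, hγ, rfl⟩ ⟨δ, hδ, rfl⟩
    refine ⟨δ.trans γ, fun t => ?_, (loopClass_trans δ γ).symm⟩
    rw [Path.trans_apply]
    split_ifs
    exacts [hδ _, hγ _]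
  inv_mem' := by
    rintro _ ⟨γ, hγ, rfl⟩
    exact ⟨γ.symm, fun _ => hγ _, (loopClass_symm γ).symm⟩

end LoopClass

theorem pathSpanierGroup_subset_loopClassesIn_iff {X : Type*} [TopologicalSpace X]
    {x₀ : X} {U : Set X} (hx : x₀ ∈ U) (V : ∀ x₁ : X, Path x₀ x₁ → Set X) :
    (pathSpanierGroup x₀ V : Set (FundamentalGroup X x₀)) ⊆ loopClassesIn x₀ U ↔
      ∀ (x₁ : X) (α : Path x₀ x₁) (β : Path x₁ x₁), (∀ t, β t ∈ V x₁ α) →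
        ∃ γ : Path x₀ x₀, (∀ t, γ t ∈ U) ∧ γ.Homotopic ((α.trans β).trans α.symm) := by
  change pathSpanierGroup x₀ V ≤ loopClassesSubgroup x₀ U hx ↔ _
  rw [pathSpanierGroup, Subgroup.closure_le]
  constructor
  · intro h x₁ α β hβ
    obtain ⟨γ, hγU, hγ⟩ := h ⟨x₁, α, β, hβ, rfl⟩
    exact ⟨γ, hγU, loopClass_eq_loopClass_iff.mp hγ.symm⟩
  · rintro h _ ⟨x₁, α, β, hβ, rfl⟩
    obtain ⟨γ, hγU, hγ⟩ := h x₁ α β hβ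
    exact ⟨γ, hγU, (loopClass_eq_loopClass_iff.mpr hγ).symm⟩

theorem slt_iff_pathSpanier_general {X : Type*} [TopologicalSpace X]
    (x₀ : X) :
    IsSLTAt X x₀ ↔
      ∀ U : Set X, IsOpen U → x₀ ∈ U →
        ∃ V : ∀ x₁ : X, Path x₀ x₁ → Set X,
          (∀ (x₁ : X) (α : Path x₀ x₁), IsOpen (V x₁ α) ∧ x₁ ∈ V x₁ α) ∧
          (pathSpanierGroup x₀ V : Set (FundamentalGroup X x₀)) ⊆ loopClassesIn x₀ U := by
  constructor
  · intro hslt U hU hx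
    choose V hVopen hVmem hVtransfer using fun x₁ (α : Path x₀ x₁) => hslt x₁ α U hU hx
    exact ⟨V, fun x₁ α => ⟨hVopen x₁ α, hVmem x₁ α⟩,
      (pathSpanierGroup_subset_loopClassesIn_iff hx V).mpr hVtransfer⟩
  · intro hcover x₁ α U hU hx
    obtain ⟨V, hV, hsub⟩ := hcover U hU hx
    exact ⟨V x₁ α, (hV x₁ α).1, (hV x₁ α).2,
      (pathSpanierGroup_subset_loopClassesIn_iff hx V).mp hsub x₁ α⟩

/-- For a locally path connected space, `X` is SLT at `x₀` iff for every open
neighborhood `U` of `x₀` there is a path open cover `V` of `X` at `x₀` whose path Spanier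
group is contained in `i₊π₁(U, x₀)`. -/
theorem slt_iff_pathSpanier {X : Type*} [TopologicalSpace X] [LocallyPathConnectedSpace X]
    (x₀ : X) :
    IsSLTAt X x₀ ↔
      ∀ U : Set X, IsOpen U → x₀ ∈ U →
        ∃ V : ∀ x₁ : X, Path x₀ x₁ → Set X,
          (∀ (x₁ : X) (α : Path x₀ x₁), IsOpen (V x₁ α) ∧ x₁ ∈ V x₁ α) ∧
          (pathSpanierGroup x₀ V : Set (FundamentalGroup X x₀)) ⊆ loopClassesIn x₀ U :=
  slt_iff_pathSpanier_general x₀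
end

section
/- Let X be a connected, locally path connected topological space and x₀ ∈ X. Then X is a small loop transfer space at x₀ if and only if for every open neighborhood U of x₀, the subgroup i_*π₁(U, x₀) is open in π₁^{qtop}(X, x₀), where i_* : π₁(U,x₀) → π₁(X,x₀) is induced by the inclusion U → X. -/
open TopologicalSpace

attribute [local instance] Path.Homotopic.setoid

/-!
Work in the fundamental groupoid. Suppose every path from `x₀` is SLT and let `l` be a loop whose
class lies in `i₊π₁(U, x₀)`. Every initial segment `l|[0, s]` conjugates the loops of some open
`W_s ∋ l s` into `U`; a subdivision `0 = t₀ ≤ ⋯ ≤ tₙ = 1` subordinate to the cover of `[0, 1]` by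
the components of `l⁻¹ W_s` yields open sets `Vₖ` and a compact-open neighbourhood of `l`: the
loops `m` with `m [tₖ, tₖ₊₁] ⊆ Vₖ` and `m tₖ` joined to `l tₖ` inside `Vₖ₋₁ ∩ Vₖ`. For such `m`,
the class `[l][m]⁻¹` telescopes into a product of conjugates of loops in `Vₖ` by `l|[0, tₖ]`,
each of which lies in `i₊π₁(U, x₀)`.
Conversely, conjugation by `α` is continuous on loop spaces, and every compact-open neighbourhood
of the constant loop at `α 1` contains all loops lying in some open `V ∋ α 1`.
-/

open CategoryTheory Set unitInterval FundamentalGroupoid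

section PathClasses

variable {X : Type*} [TopologicalSpace X]

lemma inv_fromPath {a b : X} (p : Path a b) : inv (fromPath ⟦p⟧) = fromPath ⟦p.symm⟧ :=
  (Groupoid.inv_eq_inv _).symm

-- `pathClassesIn x₀ x₀ U` is `loopClassesIn x₀ U = i₊π₁(U, x₀)`, read in the fundamental groupoid.
def pathClassesIn (a b : X) (V : Set X) : Set (mk a ⟶ mk b) :=
  { f | ∃ p : Path a b, (∀ t, p t ∈ V) ∧ f = fromPath ⟦p⟧ }

variable {a b c : X} {V W : Set X}

lemma pathClassesIn_mono (h : V ⊆ W) : pathClassesIn a b V ⊆ pathClassesIn a b W := by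
  rintro _ ⟨p, hp, rfl⟩
  exact ⟨p, fun t => h (hp t), rfl⟩

lemma comp_mem_pathClassesIn {f : mk a ⟶ mk b} {g : mk b ⟶ mk c}
    (hf : f ∈ pathClassesIn a b V) (hg : g ∈ pathClassesIn b c V) :
    f ≫ g ∈ pathClassesIn a c V := by
  obtain ⟨p, hp, rfl⟩ := hf
  obtain ⟨q, hq, rfl⟩ := hg
  refine ⟨p.trans q, fun t => ?_, rfl⟩
  rw [Path.trans_apply]
  split_ifs
  exacts [hp _, hq _]

lemma inv_mem_pathClassesIn {f : mk a ⟶ mk b} (hf : f ∈ pathClassesIn a b V) :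
    inv f ∈ pathClassesIn b a V := by
  obtain ⟨p, hp, rfl⟩ := hf
  exact ⟨p.symm, fun t => hp _, inv_fromPath p⟩

lemma eqToHom_mem_pathClassesIn (h : a = b) (ha : a ∈ V) :
    eqToHom (congrArg mk h) ∈ pathClassesIn a b V := by
  subst h
  exact ⟨Path.refl a, fun _ => ha, rfl⟩

lemma subpath_mem_pathClassesIn {x y : X} (γ : Path x y) {s t : I} (h : MapsTo γ (uIcc s t) V) :
    fromPath ⟦γ.subpath s t⟧ ∈ pathClassesIn (γ s) (γ t) V :=
  ⟨_, fun r => h.image_subset (γ.range_subpath s t ▸ mem_range_self r), rfl⟩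

end PathClasses

section Transfer

variable {X : Type*} [TopologicalSpace X] {x₀ x y : X} {U V : Set X}

def TransfersLoops (f : mk x₀ ⟶ mk x) (V U : Set X) : Prop :=
  ∀ ω ∈ pathClassesIn x x V, f ≫ ω ≫ inv f ∈ pathClassesIn x₀ x₀ U

lemma IsSLTPath.exists_transfersLoops {α : Path x₀ x} (hα : IsSLTPath α) (hU : IsOpen U)
    (hx₀ : x₀ ∈ U) : ∃ V, IsOpen V ∧ x ∈ V ∧ TransfersLoops (fromPath ⟦α⟧) V U := by
  obtain ⟨V, hV, hxV, hα⟩ := hα U hU hx₀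
  refine ⟨V, hV, hxV, ?_⟩
  rintro _ ⟨ω, hω, rfl⟩
  obtain ⟨γ, hγ, hγα⟩ := hα ω hω
  refine ⟨γ, hγ, ?_⟩
  rw [inv_fromPath, ← Category.assoc]
  exact Quotient.sound hγα.symm

lemma TransfersLoops.comp {f : mk x₀ ⟶ mk x} (hf : TransfersLoops f V U) {g : mk x ⟶ mk y}
    (hg : g ∈ pathClassesIn x y V) : TransfersLoops (f ≫ g) V U := by
  intro ω hω
  have := hf _ (comp_mem_pathClassesIn hg
    (comp_mem_pathClassesIn hω (inv_mem_pathClassesIn hg)))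
  simpa only [IsIso.inv_comp, Category.assoc] using this

lemma TransfersLoops.comp_mem_of_comp_mem {f : mk x₀ ⟶ mk x} (hf : TransfersLoops f V U)
    {h e : mk x ⟶ mk y} (hh : h ∈ pathClassesIn x y V) (he : e ∈ pathClassesIn x y V)
    {g : mk y ⟶ mk x₀} (hfhg : f ≫ h ≫ g ∈ pathClassesIn x₀ x₀ U) :
    f ≫ e ≫ g ∈ pathClassesIn x₀ x₀ U := by
  have := comp_mem_pathClassesIn (hf _ (comp_mem_pathClassesIn he (inv_mem_pathClassesIn hh)))
    hfhg
  simpa only [Category.assoc, IsIso.inv_hom_id_assoc] using this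

end Transfer

section InitialSegment

variable {X : Type*} [TopologicalSpace X] {x y : X}

def Path.initialSegment (γ : Path x y) (t : I) : Path x (γ t) :=
  (γ.subpath 0 t).cast γ.source.symm rfl

lemma Path.initialSegment_trans_subpath (γ : Path x y) (s t : I) :
    fromPath ⟦γ.initialSegment s⟧ ≫ fromPath ⟦γ.subpath s t⟧ = fromPath ⟦γ.initialSegment t⟧ :=
  Quotient.sound (Path.Homotopic.pathCast ⟨Path.Homotopy.subpathTransSubpath γ 0 s t⟩ _ _)

lemma fromPath_cast {a b a' b' : X} (p : Path a b) (ha : a' = a) (hb : b' = b) :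
    fromPath ⟦p.cast ha hb⟧ =
      eqToHom (congrArg mk ha) ≫ fromPath ⟦p⟧ ≫ eqToHom (congrArg mk hb.symm) := by
  subst ha hb
  simp

lemma Path.fromPath_initialSegment_of_eq_zero (γ : Path x y) {t : I} (ht : t = 0) :
    fromPath ⟦γ.initialSegment t⟧ =
      eqToHom (congrArg FundamentalGroupoid.mk (show x = γ t by rw [ht, γ.source])) := by
  subst ht
  have : γ.initialSegment 0 = (Path.refl x).cast rfl γ.source := by
    ext s; simp [Path.initialSegment]
  rw [this, fromPath_cast]
  exact (Category.id_comp _).trans (Category.id_comp _)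

lemma Path.fromPath_initialSegment_of_eq_one (γ : Path x y) {t : I} (ht : t = 1) :
    fromPath ⟦γ.initialSegment t⟧ =
      fromPath ⟦γ⟧ ≫
        eqToHom (congrArg FundamentalGroupoid.mk (show y = γ t by rw [ht, γ.target])) := by
  subst ht
  have : γ.initialSegment 1 = γ.cast rfl γ.target := by
    ext s; simp [Path.initialSegment]
  rw [this, fromPath_cast]
  simp

end InitialSegment

section Subdivision

variable {X : Type*} [TopologicalSpace X] {x₀ y : X}

structure TransferSubdivision (l : Path x₀ y) (U : Set X) where
  t : ℕ → I
  V : ℕ → Set X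
  n : ℕ
  t_zero : t 0 = 0
  monotone : Monotone t
  t_n : t n = 1
  isOpen : ∀ k, IsOpen (V k)
  mapsTo : ∀ k, MapsTo l (Icc (t k) (t (k + 1))) (V k)
  transfersLoops : ∀ k, TransfersLoops (fromPath ⟦l.initialSegment (t k)⟧) (V k) U

lemma IsSLTAt.nonempty_transferSubdivision (hSLT : IsSLTAt X x₀) (l : Path x₀ y) {U : Set X}
    (hU : IsOpen U) (hx₀ : x₀ ∈ U) : Nonempty (TransferSubdivision l U) := by
  have : LocallyPathConnectedSpace I := (convex_Icc (0 : ℝ) 1).locallyPathConnectedSpace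
  choose W hWo hW hWt using fun s : I =>
    (hSLT _ (l.initialSegment s)).exists_transfersLoops hU hx₀
  -- Connected components of `l ⁻¹' W s` are intervals, so `l` maps the segment from `s` to any
  -- point of the component of `s` into `W s`.
  let c : I → Set I := fun s => connectedComponentIn (l ⁻¹' W s) s
  obtain ⟨t, ht0, htm, ⟨n, hn⟩, htc⟩ := exists_monotone_Icc_subset_open_cover_unitInterval
    (c := c) (fun s => ((hWo s).preimage l.continuous).connectedComponentIn)
    (fun s _ => mem_iUnion.2 ⟨s, mem_connectedComponentIn (hW s)⟩)
  choose s hs using htc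
  have hcW : ∀ s, c s ⊆ l ⁻¹' W s := fun s => connectedComponentIn_subset _ _
  refine ⟨⟨t, fun k => W (s k), n, ht0, htm, hn n le_rfl, fun k => hWo _,
    fun k => (hs k).trans (hcW _), fun k => ?_⟩⟩
  have hst : uIcc (s k) (t k) ⊆ c (s k) :=
    (isPreconnected_connectedComponentIn (F := l ⁻¹' W (s k))).ordConnected.uIcc_subset
      (mem_connectedComponentIn (hW (s k))) (hs k ⟨le_rfl, htm k.le_succ⟩)
  rw [← l.initialSegment_trans_subpath (s k) (t k)]
  exact (hWt (s k)).comp (subpath_mem_pathClassesIn l (hst.trans (hcW _)))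

namespace TransferSubdivision

variable {l : Path x₀ y} {U : Set X} (P : TransferSubdivision l U)

lemma mem_V (k : ℕ) : l (P.t k) ∈ P.V k := P.mapsTo k ⟨le_rfl, P.monotone k.le_succ⟩

lemma mem_V_pred_inter_V (k : ℕ) : l (P.t k) ∈ P.V (k - 1) ∩ P.V k := by
  refine ⟨?_, P.mem_V k⟩
  cases k with
  | zero => exact P.mem_V 0
  | succ k => exact P.mapsTo k ⟨P.monotone k.le_succ, le_rfl⟩

-- At `k = 0` we have `k - 1 = 0`, and the junction condition holds for every `m` as `m 0 = l 0`.
def nbhd : Set (Path x₀ y) :=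
  ⋂ k ∈ Iic P.n, {m | MapsTo m (Icc (P.t k) (P.t (k + 1))) (P.V k) ∧
    m (P.t k) ∈ pathComponentIn (P.V (k - 1) ∩ P.V k) (l (P.t k))}

lemma isOpen_nbhd [LocallyPathConnectedSpace X] : IsOpen P.nbhd :=
  (finite_Iic P.n).isOpen_biInter fun k _ =>
    ((ContinuousMap.isOpen_setOfPred_mapsTo isCompact_Icc (P.isOpen k)).preimage
      continuous_induced_dom).inter
      ((((P.isOpen _).inter (P.isOpen k)).pathComponentIn _).preimage (continuous_eval_const _))

lemma self_mem_nbhd : l ∈ P.nbhd :=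
  mem_iInter₂.2 fun k _ => ⟨P.mapsTo k, mem_pathComponentIn_self (P.mem_V_pred_inter_V k)⟩

variable {P} {m : Path x₀ y}

lemma exists_junction (hm : m ∈ P.nbhd) {k : ℕ} (hk : k ≤ P.n) :
    (pathClassesIn (l (P.t k)) (m (P.t k)) (P.V (k - 1) ∩ P.V k)).Nonempty := by
  obtain ⟨p, hp⟩ := ((mem_iInter₂.1 hm) k hk).2
  exact ⟨_, p, hp, rfl⟩

lemma subpath_mem_V (k : ℕ) :
    fromPath ⟦l.subpath (P.t k) (P.t (k + 1))⟧ ∈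
      pathClassesIn (l (P.t k)) (l (P.t (k + 1))) (P.V k) := by
  refine subpath_mem_pathClassesIn l ?_
  rw [uIcc_of_le (P.monotone k.le_succ)]
  exact P.mapsTo k

lemma subpath_mem_V_of_mem_nbhd (hm : m ∈ P.nbhd) {k : ℕ} (hk : k ≤ P.n) :
    fromPath ⟦m.subpath (P.t k) (P.t (k + 1))⟧ ∈
      pathClassesIn (m (P.t k)) (m (P.t (k + 1))) (P.V k) := by
  refine subpath_mem_pathClassesIn m ?_
  rw [uIcc_of_le (P.monotone k.le_succ)]
  exact ((mem_iInter₂.1 hm) k hk).1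

lemma initialSegment_comp_comp_inv_mem (hm : m ∈ P.nbhd) {k : ℕ} (hk : k ≤ P.n) {h}
    (hh : h ∈ pathClassesIn (l (P.t k)) (m (P.t k)) (P.V (k - 1) ∩ P.V k)) :
    fromPath ⟦l.initialSegment (P.t k)⟧ ≫ h ≫ inv (fromPath ⟦m.initialSegment (P.t k)⟧) ∈
      pathClassesIn x₀ x₀ U := by
  induction k with
  | zero =>
    have he : m (P.t 0) = l (P.t 0) := by rw [P.t_zero, l.source, m.source]
    have hlm : fromPath ⟦m.initialSegment (P.t 0)⟧ =
        fromPath ⟦l.initialSegment (P.t 0)⟧ ≫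
          eqToHom (congrArg FundamentalGroupoid.mk he.symm) := by
      rw [l.fromPath_initialSegment_of_eq_zero P.t_zero,
        m.fromPath_initialSegment_of_eq_zero P.t_zero]
      simp
    rw [hlm, IsIso.inv_comp, inv_eqToHom]
    simpa only [Category.assoc] using P.transfersLoops 0 _ (comp_mem_pathClassesIn
      (pathClassesIn_mono inter_subset_right hh) (eqToHom_mem_pathClassesIn he (he ▸ P.mem_V 0)))
  | succ k ih =>
    have hk' : k ≤ P.n := k.le_succ.trans hk
    obtain ⟨h₀, hh₀⟩ := exists_junction hm hk'
    have he := comp_mem_pathClassesIn (P.subpath_mem_V k)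
      (comp_mem_pathClassesIn (pathClassesIn_mono inter_subset_left hh)
        (inv_mem_pathClassesIn (subpath_mem_V_of_mem_nbhd hm hk')))
    have hstep := (P.transfersLoops k).comp_mem_of_comp_mem
      (pathClassesIn_mono inter_subset_right hh₀) he (ih hk' hh₀)
    simpa only [← l.initialSegment_trans_subpath (P.t k) (P.t (k + 1)),
      ← m.initialSegment_trans_subpath (P.t k) (P.t (k + 1)), IsIso.inv_comp, Category.assoc]
      using hstep

lemma comp_inv_mem_of_mem_nbhd (hm : m ∈ P.nbhd) :
    fromPath ⟦l⟧ ≫ inv (fromPath ⟦m⟧) ∈ pathClassesIn x₀ x₀ U := by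
  obtain ⟨h, hh⟩ := exists_junction hm le_rfl
  have he : l (P.t P.n) = m (P.t P.n) := by rw [P.t_n, l.target, m.target]
  have hend := (P.transfersLoops P.n).comp_mem_of_comp_mem
    (pathClassesIn_mono inter_subset_right hh) (eqToHom_mem_pathClassesIn he (P.mem_V P.n))
    (initialSegment_comp_comp_inv_mem hm le_rfl hh)
  rw [l.fromPath_initialSegment_of_eq_one P.t_n,
    m.fromPath_initialSegment_of_eq_one P.t_n] at hend
  simpa using hend

end TransferSubdivision

end Subdivision

section QuotientTopology

open Topology

variable {X : Type*} [TopologicalSpace X] {x₀ : X}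

lemma IsSLTAt.isOpen_setOf_mem_pathClassesIn [LocallyPathConnectedSpace X]
    (hSLT : IsSLTAt X x₀) {U : Set X} (hU : IsOpen U) (hx₀ : x₀ ∈ U) :
    IsOpen {γ : Path x₀ x₀ | fromPath ⟦γ⟧ ∈ pathClassesIn x₀ x₀ U} := by
  refine isOpen_iff_forall_mem_open.2 fun l hl => ?_
  obtain ⟨P⟩ := hSLT.nonempty_transferSubdivision l hU hx₀
  refine ⟨P.nbhd, fun m hm => ?_, P.isOpen_nbhd, P.self_mem_nbhd⟩
  simpa using comp_mem_pathClassesIn (inv_mem_pathClassesIn (P.comp_inv_mem_of_mem_nbhd hm)) hl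

lemma exists_forall_mem_of_mem_nhds_refl {x : X} {W : Set (Path x x)}
    (hW : W ∈ 𝓝 (Path.refl x)) :
    ∃ V, IsOpen V ∧ x ∈ V ∧ ∀ γ : Path x x, (∀ t, γ t ∈ V) → γ ∈ W := by
  obtain ⟨O, hO, hOW⟩ := (mem_nhds_induced _ _ _).1 hW
  obtain ⟨⟨K, V⟩, ⟨-, hxV, hV⟩, hKV⟩ :=
    ((nhds_basis_opens x).nhds_continuousMapConst (X := I)).mem_iff.1 hO
  exact ⟨V, hV, hxV, fun γ hγ => hOW (hKV fun t _ => hγ t)⟩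

lemma isSLTPath_of_isOpen {x₁ : X} (α : Path x₀ x₁)
    (h : ∀ U, IsOpen U → x₀ ∈ U →
      IsOpen {γ : Path x₀ x₀ | fromPath ⟦γ⟧ ∈ pathClassesIn x₀ x₀ U}) :
    IsSLTPath α := by
  intro U hU hx₀
  have hconj : Continuous fun ω : Path x₁ x₁ => (α.trans ω).trans α.symm :=
    (continuous_const.path_trans continuous_id).path_trans continuous_const
  have hrefl : fromPath ⟦(α.trans (Path.refl x₁)).trans α.symm⟧ ∈ pathClassesIn x₀ x₀ U := by
    refine ⟨Path.refl x₀, fun _ => hx₀, ?_⟩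
    change (fromPath ⟦α⟧ ≫ 𝟙 _) ≫ fromPath ⟦α.symm⟧ = 𝟙 _
    rw [← inv_fromPath]
    simp
  obtain ⟨V, hV, hxV, hVW⟩ :=
    exists_forall_mem_of_mem_nhds_refl (((h U hU hx₀).preimage hconj).mem_nhds hrefl)
  refine ⟨V, hV, hxV, fun ω hω => ?_⟩
  obtain ⟨γ, hγ, hγω⟩ := hVW ω hω
  exact ⟨γ, hγ, Quotient.exact hγω.symm⟩

end QuotientTopology

theorem slt_iff_openSubgroups_general {X : Type*} [TopologicalSpace X]
    [LocallyPathConnectedSpace X] (x₀ : X) :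
    IsSLTAt X x₀ ↔
      ∀ U : Set X, IsOpen U → x₀ ∈ U → @IsOpen (FundamentalGroup X x₀) (qtop X x₀) (loopClassesIn x₀ U) := by
  unfold qtop
  simp only [isOpen_coinduced]
  exact ⟨fun hSLT U hU hx₀ => hSLT.isOpen_setOf_mem_pathClassesIn hU hx₀,
    fun h _ α => isSLTPath_of_isOpen α h⟩

/-- For a connected, locally path connected space, `X` is SLT at `x₀` iff
`i₊π₁(U, x₀)` is open in `π₁^{qtop}(X, x₀)` for every open neighborhood `U` of `x₀`. -/
theorem slt_iff_openSubgroups {X : Type*} [TopologicalSpace X] [ConnectedSpace X]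
    [LocallyPathConnectedSpace X] (x₀ : X) :
    IsSLTAt X x₀ ↔
      ∀ U : Set X, IsOpen U → x₀ ∈ U → @IsOpen (FundamentalGroup X x₀) (qtop X x₀) (loopClassesIn x₀ U) :=
  slt_iff_openSubgroups_general x₀
end

section
/- Let X be a topological space and x₀ ∈ X such that every subgroup of π₁(X, x₀) is a normal subgroup. If there exists a loop based at x₀ in X that is an SLT path, then π₁^{wh}(X, x₀) is a topological group. -/
open TopologicalSpace

attribute [local instance] Path.Homotopic.setoid

/-! The basic open sets `[α] · i₊π₁(U, x₀)` of the whisker topology are left cosets of the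
subgroups `i₊π₁(U, x₀)`. When these subgroups are normal, each coset `g N` is a fibre of the
homomorphism `G → G ⧸ N`, so `g N · h N = g h N` and `(g N)⁻¹ = g⁻¹ N`: multiplication and
inversion are continuous. -/

theorem QuotientGroup.preimage_mk_singleton_mk {G : Type*} [Group G] (N : Subgroup G) (g : G) :
    (QuotientGroup.mk ⁻¹' {(g : G ⧸ N)} : Set G) = (g * ·) '' (N : Set G) := by
  ext x
  simp [Set.image_mul_left, QuotientGroup.eq, eq_comm]

section LeftCosetTopology

open Topology

variable {G ι : Type*} [Group G] (H : ι → Subgroup G)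

def leftCosetTopology : TopologicalSpace G :=
  generateFrom {S | ∃ (g : G) (i : ι), S = (g * ·) '' (H i : Set G)}

theorem isOpen_leftCosetTopology_preimage_mk (i : ι) (g : G) :
    IsOpen[leftCosetTopology H] (QuotientGroup.mk ⁻¹' {(g : G ⧸ H i)}) := by
  rw [QuotientGroup.preimage_mk_singleton_mk]
  exact GenerateOpen.basic _ ⟨g, i, rfl⟩

theorem continuous_leftCosetTopology_iff {Y : Type*} [TopologicalSpace Y] {f : Y → G} :
    Continuous[_, leftCosetTopology H] f ↔
      ∀ (i : ι) (g : G), IsOpen (f ⁻¹' (QuotientGroup.mk ⁻¹' {(g : G ⧸ H i)})) := by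
  refine continuous_generateFrom_iff.trans ⟨fun hf i g => ?_, ?_⟩
  · rw [QuotientGroup.preimage_mk_singleton_mk]
    exact hf _ ⟨g, i, rfl⟩
  · rintro hf _ ⟨g, i, rfl⟩
    rw [← QuotientGroup.preimage_mk_singleton_mk]
    exact hf i g

theorem isTopologicalGroup_leftCosetTopology (hH : ∀ i, (H i).Normal) :
    @IsTopologicalGroup G (leftCosetTopology H) _ := by
  let _ := leftCosetTopology H
  refine { toContinuousMul := ⟨(continuous_leftCosetTopology_iff H).2 fun i g => ?_⟩,
           toContinuousInv := ⟨(continuous_leftCosetTopology_iff H).2 fun i g => ?_⟩ }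
  · rw [isOpen_prod_iff]
    intro a b hab
    refine ⟨_, _, isOpen_leftCosetTopology_preimage_mk H i a,
      isOpen_leftCosetTopology_preimage_mk H i b, rfl, rfl, ?_⟩
    rintro ⟨a', b'⟩ ⟨ha', hb'⟩
    simp only [Set.mem_preimage, Set.mem_singleton_iff] at ha' hb' hab ⊢
    rw [QuotientGroup.mk_mul, ha', hb', ← QuotientGroup.mk_mul, hab]
  · convert isOpen_leftCosetTopology_preimage_mk H i g⁻¹ using 1
    ext x
    simp [inv_eq_iff_eq_inv]

end LeftCosetTopology

noncomputable def loopSubgroup {X : Type*} [TopologicalSpace X] (x₀ : X) (U : Set X)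
    (hU : x₀ ∈ U) : Subgroup (FundamentalGroup X x₀) where
  carrier := loopClassesIn x₀ U
  one_mem' := ⟨Path.refl x₀, fun _ => hU, rfl⟩
  mul_mem' := by
    rintro _ _ ⟨γ, hγ, rfl⟩ ⟨δ, hδ, rfl⟩
    refine ⟨δ.trans γ, fun t => ?_, by rw [FundamentalGroup.mul_def]; rfl⟩
    rw [Path.trans_apply]
    split_ifs
    exacts [hδ _, hγ _]
  inv_mem' := by
    rintro _ ⟨γ, hγ, rfl⟩
    exact ⟨γ.symm, fun t => hγ _, by rw [FundamentalGroup.inv_def]; rfl⟩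

theorem whTop_eq_leftCosetTopology (X : Type*) [TopologicalSpace X] (x₀ : X) :
    whTop X x₀ = leftCosetTopology
      (fun U : {U : Set X // IsOpen U ∧ x₀ ∈ U} => loopSubgroup x₀ U U.2.2) := by
  unfold whTop leftCosetTopology
  congr 1
  ext S
  constructor
  · rintro ⟨g, U, hUo, hU, rfl⟩
    exact ⟨g, ⟨U, hUo, hU⟩, rfl⟩
  · rintro ⟨g, ⟨U, hUo, hU⟩, rfl⟩
    exact ⟨g, U, hUo, hU, rfl⟩

theorem wh_topologicalGroup_of_normal_subgroups_of_exists_sltLoop_general {X : Type*}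
    [TopologicalSpace X] (x₀ : X)
    (hnormal : ∀ H : Subgroup (FundamentalGroup X x₀), H.Normal) :
    @IsTopologicalGroup (FundamentalGroup X x₀) (whTop X x₀) _ := by
  rw [whTop_eq_leftCosetTopology]
  exact isTopologicalGroup_leftCosetTopology _ fun _ => hnormal _

/-- If every subgroup of `π₁(X, x₀)` is normal and there exists an SLT loop
based at `x₀`, then `π₁^{wh}(X, x₀)` is a topological group. -/
theorem wh_topologicalGroup_of_normal_subgroups_of_exists_sltLoop {X : Type*}
    [TopologicalSpace X] (x₀ : X)
    (hnormal : ∀ H : Subgroup (FundamentalGroup X x₀), H.Normal)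
    (hloop : ∃ γ : Path x₀ x₀, IsSLTPath γ) :
    @IsTopologicalGroup (FundamentalGroup X x₀) (whTop X x₀) _ :=
  wh_topologicalGroup_of_normal_subgroups_of_exists_sltLoop_general x₀ hnormal
end

section
/- Let X be a topological space and x₀ ∈ X. If the whisker topology and the quotient topology on the fundamental group coincide, i.e., π₁^{wh}(X, x₀) = π₁^{qtop}(X, x₀) as topological spaces, then X is a small loop transfer space at x₀ with respect to loops (SLTL at x₀). -/
open TopologicalSpace

attribute [local instance] Path.Homotopic.setoid

/-! The subgroup `i₊π₁(U, x₀)` is a basic whisker-open set, hence qtop-open, so its preimage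
in the loop space `Ω(X, x₀)` is open. Conjugation along a path `α` from `x₀` to `x₁` is a
continuous map `Ω(X, x₁) → Ω(X, x₀)` sending the constant loop to a null-homotopic loop, so the
loops at `x₁` whose conjugate lies in `i₊π₁(U, x₀)` form a neighbourhood of the constant loop.
In the compact-open topology such a neighbourhood contains every loop lying in some open
`V ∋ x₁`. -/

open Topology

lemma ContinuousMap.exists_isOpen_forall_mem_of_mem_nhds_const {Y X : Type*}
    [TopologicalSpace Y] [TopologicalSpace X] {x : X} {N : Set C(Y, X)}
    (hN : N ∈ 𝓝 (ContinuousMap.const Y x)) :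
    ∃ V : Set X, IsOpen V ∧ x ∈ V ∧ ∀ f : C(Y, X), (∀ y, f y ∈ V) → f ∈ N := by
  obtain ⟨⟨K, V⟩, ⟨-, hxV, hV⟩, hsub⟩ :=
    (nhds_basis_opens x).nhds_continuousMapConst.mem_iff.mp hN
  exact ⟨V, hV, hxV, fun f hf => hsub fun y _ => hf y⟩

lemma Path.exists_isOpen_forall_mem_of_mem_nhds_refl {X : Type*} [TopologicalSpace X]
    {x : X} {N : Set (Path x x)} (hN : N ∈ 𝓝 (Path.refl x)) :
    ∃ V : Set X, IsOpen V ∧ x ∈ V ∧ ∀ γ : Path x x, (∀ t, γ t ∈ V) → γ ∈ N := by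
  rw [nhds_induced, Filter.mem_comap] at hN
  obtain ⟨O, hO, hON⟩ := hN
  obtain ⟨V, hV, hxV, hVO⟩ := ContinuousMap.exists_isOpen_forall_mem_of_mem_nhds_const hO
  exact ⟨V, hV, hxV, fun γ hγ => hON (hVO γ hγ)⟩

lemma loopClass_eq_iff_homotopic {X : Type*} [TopologicalSpace X] {x : X} {γ γ' : Path x x} :
    loopClass γ = loopClass γ' ↔ γ.Homotopic γ' :=
  Quotient.eq (r := Path.Homotopic.setoid x x)

lemma isOpen_whTop_loopClassesIn {X : Type*} [TopologicalSpace X] {x₀ : X} {U : Set X}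
    (hU : IsOpen U) (hx₀ : x₀ ∈ U) : IsOpen[whTop X x₀] (loopClassesIn x₀ U) :=
  isOpen_generateFrom_of_mem ⟨1, U, hU, hx₀, by simp⟩

lemma isSLTAt_of_forall_isOpen_qtop_loopClassesIn {X : Type*} [TopologicalSpace X] {x₀ : X}
    (h : ∀ U : Set X, IsOpen U → x₀ ∈ U → IsOpen[qtop X x₀] (loopClassesIn x₀ U)) :
    IsSLTAt X x₀ := by
  intro x₁ α U hU hx₀U
  let conj : Path x₁ x₁ → Path x₀ x₀ := fun γ => (α.trans γ).trans α.symm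
  have hconj : Continuous conj :=
    (continuous_const.path_trans continuous_id).path_trans continuous_const
  have hN : IsOpen (conj ⁻¹' (loopClass ⁻¹' loopClassesIn x₀ U)) :=
    (isOpen_coinduced.mp (h U hU hx₀U)).preimage hconj
  have hrefl : conj (Path.refl x₁) ∈ loopClass ⁻¹' loopClassesIn x₀ U := by
    refine ⟨Path.refl x₀, fun _ => hx₀U, loopClass_eq_iff_homotopic.mpr ?_⟩
    exact (Path.Homotopic.hcomp ⟨Path.Homotopy.transRefl α⟩ (.refl _)).trans
      ⟨(Path.Homotopy.reflTransSymm α).symm⟩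
  obtain ⟨V, hV, hx₁V, hVN⟩ :=
    Path.exists_isOpen_forall_mem_of_mem_nhds_refl (hN.mem_nhds hrefl)
  refine ⟨V, hV, hx₁V, fun γ hγ => ?_⟩
  obtain ⟨γ', hγ'U, hγ'⟩ := hVN γ hγ
  exact ⟨γ', hγ'U, loopClass_eq_iff_homotopic.mp hγ'.symm⟩

/-- If the whisker topology and the quotient topology on the fundamental group
coincide, then `X` is SLTL at `x₀`. -/
theorem sltl_of_wh_eq_qtop {X : Type*} [TopologicalSpace X] (x₀ : X)
    (h : whTop X x₀ = qtop X x₀) : IsSLTLAt X x₀ :=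
  fun γ => isSLTAt_of_forall_isOpen_qtop_loopClassesIn
    (fun _ hU hx₀ => h ▸ isOpen_whTop_loopClassesIn hU hx₀) x₀ γ
end

section
/- Let X be a topological space and x₀ ∈ X. Suppose X is SLTL at x₀ and for every point x ∈ X there exists a path α_x from x₀ to x that is an SLT path. Then X is a small loop transfer space at x₀ (i.e., every path starting at x₀ is an SLT path). -/
open TopologicalSpace

attribute [local instance] Path.Homotopic.setoid

/-!
Given a path `α` from `x₀` to `x₁`, pick an SLT path `β` from `x₀` to `x₁`. Then `α` is
homotopic to `(α · β⁻¹) · β`, where `α · β⁻¹` is a loop at `x₀` and hence SLT. SLT paths are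
closed under concatenation (compose the two neighbourhood transfers) and being SLT only
depends on the homotopy class, since conjugation along homotopic paths gives homotopic loops.
-/

namespace Path.Homotopic

variable {X : Type*} [TopologicalSpace X] {x y z : X}

theorem conj_trans (α : Path x y) (β : Path y z) (γ : Path z z) :
    (((α.trans β).trans γ).trans (α.trans β).symm).Homotopic
      ((α.trans ((β.trans γ).trans β.symm)).trans α.symm) := by
  simp only [← Quotient.eq, Quotient.mk_trans, Quotient.mk_symm, Path.trans_symm,
    Quotient.trans_assoc]

theorem trans_symm_trans (α : Path x z) (β : Path y z) :
    ((α.trans β.symm).trans β).Homotopic α := by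
  simp only [← Quotient.eq, Quotient.mk_trans, Quotient.mk_symm, Quotient.trans_assoc,
    Quotient.symm_trans, Quotient.trans_refl]

theorem conj_congr_path {α α' : Path x y} (hα : α.Homotopic α') (γ : Path y y) :
    ((α.trans γ).trans α.symm).Homotopic ((α'.trans γ).trans α'.symm) :=
  (hα.hcomp (refl γ)).hcomp hα.symm₂

theorem conj_congr_loop (α : Path x y) {γ γ' : Path y y} (hγ : γ.Homotopic γ') :
    ((α.trans γ).trans α.symm).Homotopic ((α.trans γ').trans α.symm) :=
  ((refl α).hcomp hγ).hcomp (refl α.symm)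

end Path.Homotopic

namespace IsSLTPath

variable {X : Type*} [TopologicalSpace X] {x y z : X}

theorem of_homotopic {α α' : Path x y} (hα : IsSLTPath α) (h : α.Homotopic α') :
    IsSLTPath α' := by
  intro U hU hxU
  obtain ⟨V, hV, hyV, hUV⟩ := hα U hU hxU
  refine ⟨V, hV, hyV, fun γ hγV => ?_⟩
  obtain ⟨γ', hγ'U, hγ'⟩ := hUV γ hγV
  exact ⟨γ', hγ'U, hγ'.trans (Path.Homotopic.conj_congr_path h γ)⟩

theorem trans {α : Path x y} {β : Path y z} (hα : IsSLTPath α) (hβ : IsSLTPath β) :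
    IsSLTPath (α.trans β) := by
  intro U hU hxU
  obtain ⟨W, hW, hyW, hUW⟩ := hα U hU hxU
  obtain ⟨V, hV, hzV, hWV⟩ := hβ W hW hyW
  refine ⟨V, hV, hzV, fun γ hγV => ?_⟩
  obtain ⟨γ'', hγ''W, hγ''⟩ := hWV γ hγV
  obtain ⟨γ', hγ'U, hγ'⟩ := hUW γ'' hγ''W
  exact ⟨γ', hγ'U, (hγ'.trans (Path.Homotopic.conj_congr_loop α hγ'')).trans
    (Path.Homotopic.conj_trans α β γ).symm⟩

end IsSLTPath

/-- If `X` is SLTL at `x₀` and every point of `X` is the endpoint of some SLT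
path starting at `x₀`, then `X` is SLT at `x₀`. -/
theorem slt_of_sltl_of_sltPaths {X : Type*} [TopologicalSpace X] (x₀ : X)
    (hsltl : IsSLTLAt X x₀)
    (hpaths : ∀ x : X, ∃ α : Path x₀ x, IsSLTPath α) :
    IsSLTAt X x₀ := by
  intro x₁ α
  obtain ⟨β, hβ⟩ := hpaths x₁
  exact ((hsltl (α.trans β.symm)).trans hβ).of_homotopic
    (Path.Homotopic.trans_symm_trans α β)
end
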